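/- For every a > 0 and b ∈ (0,1), if (x,y) ∈ [0,1]² satisfies 0 ≤ y < x ≤ 1, then the sequence of iterates F_{a,b}^n(x,y) converges to (1,0) as n → ∞. -/

import Mathlib

/-- The two-dimensional map `F_{a,b}`. -/
noncomputable def chaosMap2 (a b : ℝ) : ℝ × ℝ → ℝ × ℝ :=
  fun p => (p.1 / (p.1 + (1 - p.1) * Real.exp (a * (p.2 - b))),
            p.2 / (p.2 + (1 - p.2) * Real.exp (a * (p.1 - b))))

/-!
In logit coordinates `x = σ u`, `y = σ v` (with `σ` the sigmoid) the map becomes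
`(u, v) ↦ (u - a (σ v - b), v - a (σ u - b))`. While `v < u` the gap `u - v` is nondecreasing,
`v` stays bounded above and `u` bounded below. As long as the gap stays below a level `M`, `v`
is thus confined to a compact interval, on which the increment `a (σ u - σ v)` of the gap is
bounded away from zero; hence the gap tends to infinity. Once the gap is large, `v` drops by a
fixed amount whenever it is above a given level, so `v → -∞`, and the symmetry
`(u, v, b) ↦ (-v, -u, 1 - b)` gives `u → ∞`. The edges `y = 0` and `x = 1` are invariant, and on
them the map is a translation in the logit of the other coordinate.
-/

open Real Filter Topology Function Set

theorem Real.sigmoid_sub (u c : ℝ) :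
    sigmoid (u - c) = sigmoid u / (sigmoid u + (1 - sigmoid u) * exp c) := by
  have h : 1 + exp c * exp (-u) ≠ 0 := by positivity
  rw [sigmoid_def, sigmoid_def, neg_sub, sub_eq_add_neg, exp_add]
  field_simp
  rw [add_sub_cancel_left, div_self h]

theorem exists_pos_forall_le_add_sub_of_strictMono {f : ℝ → ℝ} (hf : StrictMono f)
    (hfc : Continuous f) {d : ℝ} (hd : 0 < d) (L H : ℝ) :
    ∃ c > 0, ∀ t ∈ Icc L H, c ≤ f (t + d) - f t :=
  isCompact_Icc.exists_forall_le' (by fun_prop) fun _ _ => sub_pos.2 (hf (by linarith))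

theorem le_max_of_succ_le_max {α : Type*} [LinearOrder α] {w : ℕ → α} {C : α}
    (h : ∀ n, w (n + 1) ≤ max (w n) C) (n : ℕ) : w n ≤ max (w 0) C := by
  induction n with
  | zero => exact le_max_left _ _
  | succ n ih => exact (h n).trans (max_le ih (le_max_right _ _))

theorem tendsto_atBot_of_succ_le_max {w : ℕ → ℝ}
    (h : ∀ C, ∃ ε > 0, ∀ᶠ n in atTop, w (n + 1) ≤ max (w n - ε) C) :
    Tendsto w atTop atBot := by
  refine tendsto_atBot.2 fun C => ?_
  obtain ⟨ε, hε, hstep⟩ := h C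
  obtain ⟨N, hN⟩ := eventually_atTop.1 hstep
  have hdesc (m : ℕ) : w (N + m) ≤ max (w N - m * ε) C := by
    induction m with
    | zero => simp
    | succ m ih =>
      calc w (N + (m + 1)) ≤ max (w (N + m) - ε) C := hN _ (Nat.le_add_right _ _)
        _ ≤ max (max (w N - m * ε) C - ε) C := by gcongr
        _ ≤ max (w N - ↑(m + 1) * ε) C := by
          rw [← max_sub_sub_right, Nat.cast_succ]
          exact max_le (max_le (le_max_of_le_left (by linarith)) (le_max_of_le_right (by linarith)))
            (le_max_right _ _)
  obtain ⟨m₀, hm₀⟩ := exists_nat_ge ((w N - C) / ε)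
  refine eventually_atTop.2 ⟨N + m₀, fun n hn => ?_⟩
  obtain ⟨m, rfl⟩ := Nat.exists_eq_add_of_le (le_trans (Nat.le_add_right N m₀) hn)
  have hm : (m₀ : ℝ) ≤ m := by exact_mod_cast (by omega : m₀ ≤ m)
  refine (hdesc m).trans (max_le ?_ le_rfl)
  rw [div_le_iff₀ hε] at hm₀
  nlinarith

noncomputable def logitMap (a b : ℝ) (q : ℝ × ℝ) : ℝ × ℝ :=
  (q.1 - a * (sigmoid q.2 - b), q.2 - a * (sigmoid q.1 - b))

theorem semiconj_sigmoid_logitMap (a b : ℝ) :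
    Semiconj (Prod.map sigmoid sigmoid) (logitMap a b) (chaosMap2 a b) := by
  rintro ⟨u, v⟩
  simp only [logitMap, chaosMap2, Prod.map, sigmoid_sub]

theorem semiconj_neg_swap_logitMap (a b : ℝ) :
    Semiconj (fun q : ℝ × ℝ => -q.swap) (logitMap a (1 - b)) (logitMap a b) := by
  rintro ⟨u, v⟩
  simp only [logitMap, Prod.swap_prod_mk, Prod.neg_mk, sigmoid_neg]
  ext <;> ring

namespace logitMap

variable {a b : ℝ} {q : ℝ × ℝ}

theorem iterate_eq_neg_swap (n : ℕ) :
    (logitMap a b)^[n] q = -((logitMap a (1 - b))^[n] (-q.swap)).swap := by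
  simpa using ((semiconj_neg_swap_logitMap a b).iterate_right n (-q.swap)).symm

theorem fst_sub_snd :
    (logitMap a b q).1 - (logitMap a b q).2 = q.1 - q.2 + a * (sigmoid q.1 - sigmoid q.2) := by
  simp only [logitMap]
  ring

theorem fst_sub_snd_le_iterate (ha : 0 ≤ a) (hq : q.2 ≤ q.1) (n : ℕ) :
    q.1 - q.2 ≤ ((logitMap a b)^[n] q).1 - ((logitMap a b)^[n] q).2 := by
  induction n with
  | zero => simp
  | succ n ih =>
    rw [iterate_succ_apply', fst_sub_snd]
    set r := (logitMap a b)^[n] q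
    have := mul_nonneg ha (sub_nonneg.2 (sigmoid_le (show r.2 ≤ r.1 by linarith)))
    linarith

theorem snd_le_max {β : ℝ} (ha : 0 ≤ a) (hβ : b ≤ sigmoid β) (hq : q.2 ≤ q.1) :
    (logitMap a b q).2 ≤ max q.2 (β + a) := by
  simp only [logitMap]
  by_cases h : b ≤ sigmoid q.1
  · exact le_max_of_le_left (by nlinarith)
  · have : q.1 < β := sigmoid_lt_iff.1 (by linarith)
    exact le_max_of_le_right (by nlinarith [sigmoid_pos q.1, sigmoid_lt_one β])

theorem exists_iterate_snd_le (ha : 0 ≤ a) (hb : b < 1) (hq : q.2 ≤ q.1) :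
    ∃ C, ∀ n, ((logitMap a b)^[n] q).2 ≤ C := by
  obtain ⟨β, hβ⟩ := (tendsto_sigmoid_atTop.eventually (le_mem_nhds hb)).exists
  refine ⟨max q.2 (β + a),
    le_max_of_succ_le_max (w := fun n => ((logitMap a b)^[n] q).2) fun n => ?_⟩
  rw [iterate_succ_apply']
  exact snd_le_max ha hβ (by linarith [fst_sub_snd_le_iterate (b := b) ha hq n])

theorem exists_le_iterate_fst (ha : 0 ≤ a) (hb : 0 < b) (hq : q.2 ≤ q.1) :
    ∃ C, ∀ n, C ≤ ((logitMap a b)^[n] q).1 := by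
  obtain ⟨C, hC⟩ := exists_iterate_snd_le (b := 1 - b) (q := -q.swap) ha (by linarith)
    (by simpa using hq)
  refine ⟨-C, fun n => ?_⟩
  rw [iterate_eq_neg_swap n, Prod.fst_neg, Prod.fst_swap]
  linarith [hC n]

theorem tendsto_iterate_fst_sub_snd (ha : 0 < a) (hb : b ∈ Ioo 0 1) (hq : q.2 < q.1) :
    Tendsto (fun n => ((logitMap a b)^[n] q).1 - ((logitMap a b)^[n] q).2) atTop atTop := by
  obtain ⟨U, hU⟩ := exists_le_iterate_fst ha.le hb.1 hq.le
  obtain ⟨V, hV⟩ := exists_iterate_snd_le ha.le hb.2 hq.le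
  refine tendsto_neg_atBot_iff.1 (tendsto_atBot_of_succ_le_max fun C => ?_)
  -- While the gap is at most `-C`, the point `v` lies in `[U + C, V]`, where `σ (t + d) - σ t`
  -- is bounded below by some `c > 0`.
  obtain ⟨c, hc, hgap⟩ := exists_pos_forall_le_add_sub_of_strictMono sigmoid_strictMono
    continuous_sigmoid (sub_pos.2 hq) (U + C) V
  refine ⟨a * c, mul_pos ha hc, Eventually.of_forall fun n => ?_⟩
  have hD := fst_sub_snd_le_iterate (b := b) ha.le hq.le n
  rw [iterate_succ_apply', fst_sub_snd]
  set r := (logitMap a b)^[n] q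
  have hmono : 0 ≤ a * (sigmoid r.1 - sigmoid r.2) :=
    mul_nonneg ha.le (sub_nonneg.2 (sigmoid_le (by linarith)))
  by_cases hM : C ≤ -(r.1 - r.2)
  · have hr : c ≤ sigmoid r.1 - sigmoid r.2 :=
      (hgap r.2 ⟨by linarith [hU n], hV n⟩).trans
        (sub_le_sub_right (sigmoid_le (by linarith)) _)
    exact le_max_of_le_left (by nlinarith)
  · exact le_max_of_le_right (by linarith)

theorem tendsto_iterate_snd (ha : 0 < a) (hb : b ∈ Ioo 0 1) (hq : q.2 < q.1) :
    Tendsto (fun n => ((logitMap a b)^[n] q).2) atTop atBot := by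
  obtain ⟨T, hT⟩ := (tendsto_sigmoid_atTop.eventually (lt_mem_nhds hb.2)).exists
  refine tendsto_atBot_of_succ_le_max fun K =>
    ⟨a * (sigmoid T - b), mul_pos ha (sub_pos.2 hT), ?_⟩
  filter_upwards [(tendsto_iterate_fst_sub_snd ha hb hq).eventually_ge_atTop (T + a - K)]
    with n hn
  rw [iterate_succ_apply']
  set r := (logitMap a b)^[n] q
  simp only [logitMap]
  -- Either `u ≥ T`, and `v` drops by `a (σ T - b)`, or `v = u - gap < K - a` and one step of
  -- size at most `a` keeps it below `K`.
  by_cases hu : T ≤ r.1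
  · exact le_max_of_le_left (by nlinarith [sigmoid_le hu])
  · exact le_max_of_le_right (by nlinarith [sigmoid_pos r.1, hb.2])

theorem tendsto_iterate_fst (ha : 0 < a) (hb : b ∈ Ioo 0 1) (hq : q.2 < q.1) :
    Tendsto (fun n => ((logitMap a b)^[n] q).1) atTop atTop := by
  have := tendsto_iterate_snd (b := 1 - b) (q := -q.swap) ha
    ⟨by linarith [hb.2], by linarith [hb.1]⟩ (by simpa using hq)
  refine (tendsto_neg_atBot_atTop.comp this).congr fun n => ?_
  rw [iterate_eq_neg_swap n (b := b), comp_apply, Prod.fst_neg, Prod.fst_swap]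

theorem tendsto_iterate (ha : 0 < a) (hb : b ∈ Ioo 0 1) (hq : q.2 < q.1) :
    Tendsto (fun n => (logitMap a b)^[n] q) atTop (atTop ×ˢ atBot) :=
  (tendsto_iterate_fst ha hb hq).prodMk (tendsto_iterate_snd ha hb hq)

end logitMap

section chaosMap2

variable {a b : ℝ}

theorem semiconj_sigmoid_zero_chaosMap2 (a b : ℝ) :
    Semiconj (fun u => (sigmoid u, (0 : ℝ))) (· + a * b) (chaosMap2 a b) := by
  intro u
  refine Prod.ext ?_ (zero_div _).symm
  change sigmoid (u + a * b) = sigmoid u / (sigmoid u + (1 - sigmoid u) * exp (a * (0 - b)))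
  rw [← sigmoid_sub]
  ring_nf

theorem semiconj_one_sigmoid_chaosMap2 (a b : ℝ) :
    Semiconj (fun v => ((1 : ℝ), sigmoid v)) (· + a * (b - 1)) (chaosMap2 a b) := by
  intro v
  refine Prod.ext (by simp [chaosMap2]) ?_
  change sigmoid (v + a * (b - 1)) = sigmoid v / (sigmoid v + (1 - sigmoid v) * exp (a * (1 - b)))
  rw [← sigmoid_sub]
  ring_nf

theorem isFixedPt_chaosMap2_one_zero : IsFixedPt (chaosMap2 a b) (1, 0) := by
  simp [IsFixedPt, chaosMap2]

theorem tendsto_iterate_chaosMap2_of_mem_Ioo (ha : 0 < a) (hb : b ∈ Ioo 0 1) {x y : ℝ}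
    (hy : 0 < y) (hyx : y < x) (hx : x < 1) :
    Tendsto (fun n => (chaosMap2 a b)^[n] (x, y)) atTop (𝓝 (1, 0)) := by
  obtain ⟨u, rfl⟩ : x ∈ range sigmoid := range_sigmoid ▸ ⟨hy.trans hyx, hx⟩
  obtain ⟨v, rfl⟩ : y ∈ range sigmoid := range_sigmoid ▸ ⟨hy, hyx.trans hx⟩
  have hlim := (tendsto_sigmoid_atTop.prodMap tendsto_sigmoid_atBot).comp
    (logitMap.tendsto_iterate (q := (u, v)) ha hb (sigmoid_lt_iff.1 hyx))
  rw [← nhds_prod_eq] at hlim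
  exact hlim.congr fun n => ((semiconj_sigmoid_logitMap a b).iterate_right n (u, v))

theorem tendsto_iterate_chaosMap2_zero (ha : 0 < a) (hb : 0 < b) {x : ℝ} (hx : x ∈ Ioo 0 1) :
    Tendsto (fun n => (chaosMap2 a b)^[n] (x, 0)) atTop (𝓝 (1, 0)) := by
  obtain ⟨u, rfl⟩ : x ∈ range sigmoid := range_sigmoid ▸ hx
  simp only [← (semiconj_sigmoid_zero_chaosMap2 a b).iterate_right _ u, add_right_iterate]
  exact (tendsto_sigmoid_atTop.comp (tendsto_atTop_add_const_left _ u
    (tendsto_id.atTop_nsmul_const (mul_pos ha hb)))).prodMk_nhds tendsto_const_nhds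

theorem tendsto_iterate_chaosMap2_one (ha : 0 < a) (hb : b < 1) {y : ℝ} (hy : y ∈ Ioo 0 1) :
    Tendsto (fun n => (chaosMap2 a b)^[n] (1, y)) atTop (𝓝 (1, 0)) := by
  obtain ⟨v, rfl⟩ : y ∈ range sigmoid := range_sigmoid ▸ hy
  simp only [← (semiconj_one_sigmoid_chaosMap2 a b).iterate_right _ v, add_right_iterate]
  exact tendsto_const_nhds.prodMk_nhds (tendsto_sigmoid_atBot.comp
    (tendsto_atBot_add_const_left _ v
      (tendsto_id.atTop_nsmul_neg_const (mul_neg_of_pos_of_neg ha (sub_neg.2 hb)))))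

end chaosMap2

/-- For every `a > 0` and `b ∈ (0,1)`, the trajectory of every point
`(x,y) ∈ [0,1]²` with `y < x` converges to `(1,0)`. -/
theorem stmt_18 (a b : ℝ) (ha : 0 < a) (hb : b ∈ Set.Ioo (0 : ℝ) 1)
    (x y : ℝ) (hy0 : 0 ≤ y) (hyx : y < x) (hx1 : x ≤ 1) :
    Filter.Tendsto (fun n : ℕ => (chaosMap2 a b)^[n] (x, y))
      Filter.atTop (nhds ((1 : ℝ), (0 : ℝ))) := by
  rcases hy0.eq_or_lt with rfl | hy0
  · rcases hx1.lt_or_eq with hx1 | rfl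
    · exact tendsto_iterate_chaosMap2_zero ha hb.1 ⟨hyx, hx1⟩
    · simp only [iterate_fixed isFixedPt_chaosMap2_one_zero, tendsto_const_nhds]
  · rcases hx1.lt_or_eq with hx1 | rfl
    · exact tendsto_iterate_chaosMap2_of_mem_Ioo ha hb hy0 hyx hx1
    · exact tendsto_iterate_chaosMap2_one ha hb.2 ⟨hy0, hyx⟩
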